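/- Let λ ∈ ℝ and let f_Q be a Q-level quantizer satisfying the constrained stationarity condition ∫_{τ_i}^{τ_{i+1}} ((λ + 2)τ − 2 m_i) φ(τ) dτ = 0 for every i = 1, …, Q, together with E[f_Q(g) g] = 1. Then E[f_Q(g)²] = (2 + λ)/2, and the mean squared error satisfies e'_Q := E[(f_Q(g) − g)²] = λ/2; moreover E[(f_Q(g) − g)²] equals σ² := E[(f_Q(g) − μ g)²] where μ = E[f_Q(g) g] = 1. -/

import Mathlib

/-!
Multiplying the stationarity condition on the `i`-th cell by `m_i` and summing over the cells
gives `E[f(g) ((λ + 2) g - 2 f(g))] = 0`, i.e. `2 E[f(g)²] = (λ + 2) E[f(g) g] = λ + 2`.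
Expanding the square with `E[g²] = 1` then gives `E[(f(g) - g)²] = (λ + 2)/2 - 2 + 1 = λ/2`.
-/

noncomputable section
open MeasureTheory ProbabilityTheory Real Set

/-- The standard Gaussian measure on `ℝ`. -/
def stdGauss : Measure ℝ := gaussianReal 0 1

instance : IsProbabilityMeasure stdGauss := by unfold stdGauss; infer_instance

/-- A `Q`-level quantizer: thresholds `-∞ = τ₁ < τ₂ < … < τ_{Q+1} = +∞` (indexed here by
`Fin (Q+1)`, so `τ 0 = ⊥` and `τ (Fin.last Q) = ⊤`) and values `m₁, …, m_Q`, with the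
step function `f` equal to `m i` on the cell `[τ i, τ (i+1))`. -/
structure Quantizer (Q : ℕ) where
  m : Fin Q → ℝ
  τ : Fin (Q + 1) → EReal
  f : ℝ → ℝ
  τ_bot : τ 0 = ⊥
  τ_top : τ (Fin.last Q) = ⊤
  τ_mono : StrictMono τ
  f_eq : ∀ (i : Fin Q) (t : ℝ), τ i.castSucc ≤ (t : EReal) → (t : EReal) < τ i.succ → f t = m i

/-- The `i`-th quantization cell `[τ_i, τ_{i+1})` (as a subset of `ℝ`). -/
def Quantizer.cell {Q : ℕ} (q : Quantizer Q) (i : Fin Q) : Set ℝ :=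
  {t : ℝ | q.τ i.castSucc ≤ (t : EReal) ∧ (t : EReal) < q.τ i.succ}

/-- The mean squared error `E[(f_Q(g) - g)²]` of a quantizer. -/
def MSE {Q : ℕ} (q : Quantizer Q) : ℝ := ∫ t, (q.f t - t) ^ 2 ∂stdGauss

/-- Constrained (Lagrangian) stationarity:
`∫_{τ_i}^{τ_{i+1}} ((λ+2)τ − 2 m_i) φ(τ) dτ = 0` for every cell. -/
def ConstrainedStationary {Q : ℕ} (q : Quantizer Q) (lam : ℝ) : Prop :=
  ∀ i : Fin Q, ∫ t in q.cell i, ((lam + 2) * t - 2 * q.m i) ∂stdGauss = 0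

theorem Fin.exists_castSucc_le_and_lt_succ {α : Type*} [LinearOrder α] :
    ∀ {n : ℕ} (τ : Fin (n + 1) → α) {x : α}, τ 0 ≤ x → x < τ (Fin.last n) →
      ∃ i : Fin n, τ i.castSucc ≤ x ∧ x < τ i.succ
  | 0, _, _, h0, hn => absurd (h0.trans_lt hn) (lt_irrefl _)
  | n + 1, τ, x, h0, hn => by
    by_cases hx : x < τ (Fin.last n).castSucc
    · obtain ⟨i, hi⟩ := exists_castSucc_le_and_lt_succ (τ ∘ Fin.castSucc) h0 hx
      exact ⟨i.castSucc, hi⟩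
    · exact ⟨Fin.last n, not_lt.1 hx, hn⟩

lemma integral_sq_stdGauss : ∫ t, t ^ 2 ∂stdGauss = 1 := by
  have h := variance_eq_integral (X := fun t : ℝ => t) (μ := gaussianReal 0 1)
    measurable_id.aemeasurable
  rw [variance_fun_id_gaussianReal, integral_id_gaussianReal] at h
  simpa [stdGauss] using h.symm

lemma integrable_id_stdGauss : Integrable (fun t : ℝ => t) stdGauss :=
  (memLp_id_gaussianReal 1).integrable le_rfl

lemma integrable_sq_stdGauss : Integrable (fun t : ℝ => t ^ 2) stdGauss :=
  (memLp_id_gaussianReal 2).integrable_sq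

open Function

namespace Quantizer

variable {Q : ℕ} (q : Quantizer Q)

lemma measurableSet_cell (i : Fin Q) : MeasurableSet (q.cell i) :=
  measurable_coe_real_ereal measurableSet_Ico

lemma pairwise_disjoint_cell : Pairwise (Disjoint on q.cell) := by
  intro i j hij
  have h := q.τ_mono.monotone.pairwise_disjoint_on_Ico_succ ((Fin.castSucc_injective Q).ne hij)
  simp only [onFun, Fin.orderSucc_castSucc] at h
  exact h.preimage _

lemma exists_mem_cell (t : ℝ) : ∃ i, t ∈ q.cell i :=
  Fin.exists_castSucc_le_and_lt_succ q.τ (q.τ_bot ▸ bot_le) (q.τ_top ▸ EReal.coe_lt_top t)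

lemma iUnion_cell : ⋃ i, q.cell i = univ :=
  eq_univ_of_forall fun t => mem_iUnion.2 (q.exists_mem_cell t)

lemma f_eq_of_mem_cell {i : Fin Q} {t : ℝ} (ht : t ∈ q.cell i) : q.f t = q.m i :=
  q.f_eq i t ht.1 ht.2

lemma f_eq_sum_indicator : q.f = fun t => ∑ i, (q.cell i).indicator (fun _ => q.m i) t := by
  funext t
  obtain ⟨i, hi⟩ := q.exists_mem_cell t
  rw [Finset.sum_eq_single_of_mem i (Finset.mem_univ i), indicator_of_mem hi,
    q.f_eq_of_mem_cell hi]
  exact fun j _ hji =>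
    indicator_of_notMem (disjoint_left.1 (q.pairwise_disjoint_cell hji.symm) hi) _

lemma measurable_f : Measurable q.f := by
  rw [f_eq_sum_indicator]
  exact Finset.measurable_sum _ fun i _ => measurable_const.indicator (q.measurableSet_cell i)

lemma norm_f_le (t : ℝ) : ‖q.f t‖ ≤ ∑ i, ‖q.m i‖ := by
  obtain ⟨i, hi⟩ := q.exists_mem_cell t
  rw [q.f_eq_of_mem_cell hi]
  exact Finset.single_le_sum (fun j _ => norm_nonneg (q.m j)) (Finset.mem_univ i)

variable {μ : Measure ℝ}

lemma integrable_f_mul {h : ℝ → ℝ} (hh : Integrable h μ) :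
    Integrable (fun t => q.f t * h t) μ :=
  hh.bdd_mul q.measurable_f.aestronglyMeasurable (ae_of_all _ q.norm_f_le)

lemma integrable_f [IsFiniteMeasure μ] : Integrable q.f μ := by
  simpa using q.integrable_f_mul (integrable_const (1 : ℝ) (μ := μ))

lemma integrable_f_sq [IsFiniteMeasure μ] : Integrable (fun t => q.f t ^ 2) μ := by
  simpa only [sq] using q.integrable_f_mul q.integrable_f

lemma integral_eq_sum_setIntegral_cell {h : ℝ → ℝ} (hh : Integrable h μ) :
    ∫ t, h t ∂μ = ∑ i, ∫ t in q.cell i, h t ∂μ := by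
  rw [← setIntegral_univ, ← q.iUnion_cell]
  exact integral_iUnion_fintype q.measurableSet_cell q.pairwise_disjoint_cell
    fun _ => hh.integrableOn

end Quantizer

theorem ConstrainedStationary.integral_f_mul_eq_zero {Q : ℕ} {q : Quantizer Q} {lam : ℝ}
    (h : ConstrainedStationary q lam) :
    ∫ t, q.f t * ((lam + 2) * t - 2 * q.f t) ∂stdGauss = 0 := by
  have hint : Integrable (fun t => (lam + 2) * t - 2 * q.f t) stdGauss :=
    (integrable_id_stdGauss.const_mul _).sub (q.integrable_f.const_mul _)
  calc ∫ t, q.f t * ((lam + 2) * t - 2 * q.f t) ∂stdGauss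
      = ∑ i, ∫ t in q.cell i, q.f t * ((lam + 2) * t - 2 * q.f t) ∂stdGauss :=
        q.integral_eq_sum_setIntegral_cell (q.integrable_f_mul hint)
    _ = ∑ i, q.m i * ∫ t in q.cell i, ((lam + 2) * t - 2 * q.m i) ∂stdGauss := by
        refine Finset.sum_congr rfl fun i _ => ?_
        rw [← integral_const_mul]
        refine setIntegral_congr_fun (q.measurableSet_cell i) fun t ht => ?_
        simp only [q.f_eq_of_mem_cell ht]
    _ = 0 := Finset.sum_eq_zero fun i _ => by rw [h i, mul_zero]

theorem ConstrainedStationary.add_two_mul_integral_f_mul_eq {Q : ℕ} {q : Quantizer Q} {lam : ℝ}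
    (h : ConstrainedStationary q lam) :
    (lam + 2) * ∫ t, q.f t * t ∂stdGauss = 2 * ∫ t, q.f t ^ 2 ∂stdGauss := by
  have hft : Integrable (fun t => q.f t * t) stdGauss := q.integrable_f_mul integrable_id_stdGauss
  rw [← sub_eq_zero, ← h.integral_f_mul_eq_zero, ← integral_const_mul, ← integral_const_mul,
    ← integral_sub (hft.const_mul _) (q.integrable_f_sq.const_mul _)]
  congr 1 with t
  ring

theorem integral_sub_id_sq {μ : Measure ℝ} {f : ℝ → ℝ}
    (hf : Integrable (fun t => f t ^ 2) μ) (hft : Integrable (fun t => f t * t) μ)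
    (hsq : Integrable (fun t : ℝ => t ^ 2) μ) :
    ∫ t, (f t - t) ^ 2 ∂μ = ∫ t, f t ^ 2 ∂μ - 2 * ∫ t, f t * t ∂μ + ∫ t, t ^ 2 ∂μ := by
  calc ∫ t, (f t - t) ^ 2 ∂μ = ∫ t, (f t ^ 2 - 2 * (f t * t)) + t ^ 2 ∂μ := by
        congr 1 with t
        ring
    _ = _ := by
        rw [integral_add (hf.sub' (hft.const_mul 2)) hsq, integral_sub hf (hft.const_mul 2),
          integral_const_mul]

/-- Under constrained stationarity with multiplier `λ` and `E[f_Q(g) g] = 1`: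
`E[f_Q(g)²] = (2+λ)/2`, `e'_Q = E[(f_Q(g)-g)²] = λ/2`, and `e'_Q = σ²` where
`σ² = E[(f_Q(g) - μ g)²]` with `μ = E[f_Q(g) g] = 1`. -/
theorem constrained_mse {Q : ℕ} (q : Quantizer Q) (lam : ℝ)
    (hstat : ConstrainedStationary q lam)
    (hμ : ∫ t, q.f t * t ∂stdGauss = 1) :
    (∫ t, q.f t ^ 2 ∂stdGauss = (2 + lam) / 2) ∧
    (∫ t, (q.f t - t) ^ 2 ∂stdGauss = lam / 2) ∧
    (∫ t, (q.f t - t) ^ 2 ∂stdGauss =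
      ∫ t, (q.f t - (∫ s, q.f s * s ∂stdGauss) * t) ^ 2 ∂stdGauss) := by
  have hf2 : ∫ t, q.f t ^ 2 ∂stdGauss = (2 + lam) / 2 := by
    have h := hstat.add_two_mul_integral_f_mul_eq
    rw [hμ] at h
    linarith
  refine ⟨hf2, ?_, by simp only [hμ, one_mul]⟩
  rw [integral_sub_id_sq q.integrable_f_sq (q.integrable_f_mul integrable_id_stdGauss) integrable_sq_stdGauss, hf2, hμ,
    integral_sq_stdGauss]
  ring
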